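/- (Mean value theorem) Let f, g : ℝ → ℝ, α > 0, β > 0, and a, b ∈ ℝ with b ∈ A := {a + kα : k ∈ ℕ₀} and a ∈ B := {b − kβ : k ∈ ℕ₀}. Suppose f and g are α,β-symmetric integrable on [a,b], f is bounded with m := inf_{t∈ℝ} f(t) and M := sup_{t∈ℝ} f(t), and g(t) ≥ 0 for all t ∈ ℝ. Then the product f·g is α,β-symmetric integrable on [a,b] and there exists K ∈ ℝ with m ≤ K ≤ M such that ∫_a^b f(t)·g(t) d_{α,β}t = K·∫_a^b g(t) d_{α,β}t. -/

import Mathlib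

/-- The α-forward integral (Nörlund sum) of `f` from `a` to `b`:
`∫_a^b f(t) Δ_α t = α·∑_{k=0}^∞ f(a+kα) − α·∑_{k=0}^∞ f(b+kα)`. -/
noncomputable def deltaInt (α : ℝ) (f : ℝ → ℝ) (a b : ℝ) : ℝ :=
  α * ∑' k : ℕ, f (a + k * α) - α * ∑' k : ℕ, f (b + k * α)

/-- `f` is α-forward integrable on `[a,b]`: both defining series converge. -/
def ForwardIntegrable (α : ℝ) (f : ℝ → ℝ) (a b : ℝ) : Prop :=
  Summable (fun k : ℕ => f (a + k * α)) ∧ Summable (fun k : ℕ => f (b + k * α))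

/-- The β-backward integral of `f` from `a` to `b`:
`∫_a^b f(t) ∇_β t = β·∑_{k=0}^∞ f(b−kβ) − β·∑_{k=0}^∞ f(a−kβ)`. -/
noncomputable def nablaInt (β : ℝ) (f : ℝ → ℝ) (a b : ℝ) : ℝ :=
  β * ∑' k : ℕ, f (b - k * β) - β * ∑' k : ℕ, f (a - k * β)

/-- `f` is β-backward integrable on `[a,b]`: both defining series converge. -/
def BackwardIntegrable (β : ℝ) (f : ℝ → ℝ) (a b : ℝ) : Prop :=
  Summable (fun k : ℕ => f (a - k * β)) ∧ Summable (fun k : ℕ => f (b - k * β))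

/-- `f` is α,β-symmetric integrable on `[a,b]`. -/
def SymIntegrable (α β : ℝ) (f : ℝ → ℝ) (a b : ℝ) : Prop :=
  ForwardIntegrable α f a b ∧ BackwardIntegrable β f a b

/-- The α,β-symmetric integral of `f` from `a` to `b`. -/
noncomputable def symInt (α β : ℝ) (f : ℝ → ℝ) (a b : ℝ) : ℝ :=
  (α / (α + β)) * deltaInt α f a b + (β / (α + β)) * nablaInt β f a b

/-!
When `b ∈ a + ℕα` and `a ∈ b - ℕβ`, the tails of the defining series cancel and both integrals
become finite sums with nonnegative weights, so the symmetric integral is monotone and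
homogeneous on integrable functions. Then `m g ≤ f g ≤ M g` places `∫ f g` between `m ∫ g` and
`M ∫ g`, and `K` is their ratio (any `K ∈ [m, M]` if `∫ g = 0`). The product `f g` is integrable
because a convergent real series converges absolutely, so multiplying its terms by the bounded
values of `f` keeps it convergent.
-/

theorem Summable.mul_of_abs_le {ι : Type*} {v w : ι → ℝ} {C : ℝ} (hv : ∀ i, |v i| ≤ C)
    (hw : Summable w) : Summable fun i => v i * w i :=
  (hw.abs.mul_left C).of_norm_bounded fun i => by
    rw [Real.norm_eq_abs, abs_mul]
    exact mul_le_mul_of_nonneg_right (hv i) (abs_nonneg _)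

theorem exists_eq_mul_of_mul_le_of_le_mul {m M I G : ℝ} (hmM : m ≤ M) (hG : 0 ≤ G)
    (hmI : m * G ≤ I) (hIM : I ≤ M * G) : ∃ K, m ≤ K ∧ K ≤ M ∧ I = K * G := by
  rcases hG.eq_or_lt with rfl | hG
  · exact ⟨m, le_rfl, hmM, by linarith⟩
  · exact ⟨I / G, (le_div_iff₀ hG).2 hmI, (div_le_iff₀ hG).2 hIM, (div_mul_cancel₀ I hG.ne').symm⟩

section SymmetricIntegral

variable {α β a b : ℝ}

theorem deltaInt_eq_sum (h : ℝ → ℝ) {n : ℕ} (hb : b = a + n * α)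
    (hs : Summable fun k : ℕ => h (a + k * α)) :
    deltaInt α h a b = α * ∑ k ∈ Finset.range n, h (a + k * α) := by
  have htail : (fun k : ℕ => h (b + k * α)) = fun k : ℕ => h (a + ↑(k + n) * α) := by
    funext k; rw [hb]; push_cast; ring_nf
  rw [deltaInt, htail, ← hs.sum_add_tsum_nat_add n]
  ring

theorem nablaInt_eq_sum (h : ℝ → ℝ) {n : ℕ} (ha : a = b - n * β)
    (hs : Summable fun k : ℕ => h (b - k * β)) :
    nablaInt β h a b = β * ∑ k ∈ Finset.range n, h (b - k * β) := by
  have htail : (fun k : ℕ => h (a - k * β)) = fun k : ℕ => h (b - ↑(k + n) * β) := by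
    funext k; rw [ha]; push_cast; ring_nf
  rw [nablaInt, htail, ← hs.sum_add_tsum_nat_add n]
  ring

theorem symInt_const_mul (c : ℝ) (h : ℝ → ℝ) :
    symInt α β (fun t => c * h t) a b = c * symInt α β h a b := by
  simp only [symInt, deltaInt, nablaInt, tsum_mul_left]
  ring

theorem SymIntegrable.const_mul {h : ℝ → ℝ} (hh : SymIntegrable α β h a b) (c : ℝ) :
    SymIntegrable α β (fun t => c * h t) a b :=
  ⟨⟨hh.1.1.mul_left c, hh.1.2.mul_left c⟩, hh.2.1.mul_left c, hh.2.2.mul_left c⟩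

theorem SymIntegrable.mul_of_abs_le {f g : ℝ → ℝ} {C : ℝ} (hg : SymIntegrable α β g a b)
    (hf : ∀ t, |f t| ≤ C) : SymIntegrable α β (fun t => f t * g t) a b :=
  ⟨⟨.mul_of_abs_le (fun _ => hf _) hg.1.1, .mul_of_abs_le (fun _ => hf _) hg.1.2⟩,
    .mul_of_abs_le (fun _ => hf _) hg.2.1, .mul_of_abs_le (fun _ => hf _) hg.2.2⟩

theorem symInt_mono (hα : 0 ≤ α) (hβ : 0 ≤ β) (hbA : ∃ n : ℕ, b = a + n * α)
    (haB : ∃ n : ℕ, a = b - n * β) ⦃h₁ h₂ : ℝ → ℝ⦄ (hh₁ : SymIntegrable α β h₁ a b)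
    (hh₂ : SymIntegrable α β h₂ a b) (hle : ∀ t, h₁ t ≤ h₂ t) :
    symInt α β h₁ a b ≤ symInt α β h₂ a b := by
  obtain ⟨n, hn⟩ := hbA
  obtain ⟨n', hn'⟩ := haB
  rw [symInt, symInt, deltaInt_eq_sum h₁ hn hh₁.1.1, deltaInt_eq_sum h₂ hn hh₂.1.1,
    nablaInt_eq_sum h₁ hn' hh₁.2.2, nablaInt_eq_sum h₂ hn' hh₂.2.2]
  gcongr with k _ k _ <;> exact hle _

end SymmetricIntegral

theorem sym_integral_mean_value_general (f g : ℝ → ℝ) (α β : ℝ) (hα : 0 < α) (hβ : 0 < β)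
    (a b : ℝ) (hbA : ∃ k : ℕ, b = a + k * α) (haB : ∃ k : ℕ, a = b - k * β)
    (hg : SymIntegrable α β g a b)
    (hbdd : BddBelow (Set.range f) ∧ BddAbove (Set.range f))
    (hg0 : ∀ t : ℝ, 0 ≤ g t) :
    SymIntegrable α β (fun t => f t * g t) a b ∧
    ∃ K : ℝ, sInf (Set.range f) ≤ K ∧ K ≤ sSup (Set.range f) ∧
      symInt α β (fun t => f t * g t) a b = K * symInt α β g a b := by
  obtain ⟨C, hC⟩ := isBounded_iff_forall_norm_le.1 (isBounded_iff_bddBelow_bddAbove.2 hbdd)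
  have hfg := hg.mul_of_abs_le fun t => hC _ ⟨t, rfl⟩
  have hm : ∀ t, sInf (Set.range f) ≤ f t := fun t => csInf_le hbdd.1 ⟨t, rfl⟩
  have hM : ∀ t, f t ≤ sSup (Set.range f) := fun t => le_csSup hbdd.2 ⟨t, rfl⟩
  have mono := symInt_mono hα.le hβ.le hbA haB
  refine ⟨hfg, exists_eq_mul_of_mul_le_of_le_mul ((hm 0).trans (hM 0)) ?_ ?_ ?_⟩
  · have h0 := mono (hg.const_mul 0) hg fun t => (zero_mul (g t)).trans_le (hg0 t)
    rwa [symInt_const_mul, zero_mul] at h0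
  · rw [← symInt_const_mul]
    exact mono (hg.const_mul _) hfg fun t => mul_le_mul_of_nonneg_right (hm t) (hg0 t)
  · rw [← symInt_const_mul]
    exact mono hfg (hg.const_mul _) fun t => mul_le_mul_of_nonneg_right (hM t) (hg0 t)

theorem sym_integral_mean_value (f g : ℝ → ℝ) (α β : ℝ) (hα : 0 < α) (hβ : 0 < β)
    (a b : ℝ) (hbA : ∃ k : ℕ, b = a + k * α) (haB : ∃ k : ℕ, a = b - k * β)
    (hf : SymIntegrable α β f a b) (hg : SymIntegrable α β g a b)
    (hbdd : BddBelow (Set.range f) ∧ BddAbove (Set.range f))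
    (hg0 : ∀ t : ℝ, 0 ≤ g t) :
    SymIntegrable α β (fun t => f t * g t) a b ∧
    ∃ K : ℝ, sInf (Set.range f) ≤ K ∧ K ≤ sSup (Set.range f) ∧
      symInt α β (fun t => f t * g t) a b = K * symInt α β g a b :=
  sym_integral_mean_value_general f g α β hα hβ a b hbA haB hg hbdd hg0
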